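/- arXiv:1401.6254 — 5 statements merged into one kernel-verified Lean document; each statement's English description precedes it below -/
import Mathlib

section
/- Mendelsohn equations: Let D be a t-(v,k,λ) design and let v ∈ C(D)^⊥ be a nonzero vector of weight w. For i ≥ 0 let n_i be the number of blocks of D intersecting the support of v in exactly i points. Then for each j = 0,1,...,t, the sum over i of C(i,j)·n_i equals λ_j · C(w,j), where λ_j = λ·C(v-j,t-j)/C(k-j,t-j). -/
open Finset

def IsDesign (v t k lam : ℕ) (B : Finset (Finset (Fin v))) : Prop :=
  (∀ b ∈ B, b.card = k) ∧
  ∀ T : Finset (Fin v), T.card = t → (B.filter (fun b => T ⊆ b)).card = lam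

def IsSelfOrthogonalDesign (v t k lam : ℕ) (B : Finset (Finset (Fin v))) : Prop :=
  IsDesign v t k lam B ∧ ∀ b₁ ∈ B, ∀ b₂ ∈ B, b₁ ≠ b₂ → (b₁ ∩ b₂).card % 2 = k % 2

def blockVec {v : ℕ} (b : Finset (Fin v)) : Fin v → ZMod 2 := fun i => if i ∈ b then 1 else 0

def designCode (v : ℕ) (B : Finset (Finset (Fin v))) : Submodule (ZMod 2) (Fin v → ZMod 2) :=
  Submodule.span (ZMod 2) (blockVec '' ↑B)

def dualSet {v : ℕ} (C : Set (Fin v → ZMod 2)) : Set (Fin v → ZMod 2) :=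
  {y | ∀ x ∈ C, ∑ i, x i * y i = 0}

def codeWt {v : ℕ} (x : Fin v → ZMod 2) : ℕ := (univ.filter fun i => x i ≠ 0).card

noncomputable def numWt {v : ℕ} (C : Submodule (ZMod 2) (Fin v → ZMod 2)) (w : ℕ) : ℕ :=
  Nat.card {x : Fin v → ZMod 2 // x ∈ C ∧ codeWt x = w}

/-!
Count the pairs `(J, b)` with `b` a block and `J` a `j`-subset of `S ∩ b`, where `S` is the
support of `y`. Grouping by blocks gives `∑ i, C(i, j) n_i`. Grouping by `J`, every `j`-set lies
in the same number `λ_j` of blocks, because double counting the pairs `(T, b)` with `J ⊆ T ⊆ b`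
and `#T = t` gives `λ_j C(k - j, t - j) = λ C(v - j, t - j)`; so the count is `λ_j C(w, j)`.
-/

section Counting

variable {α : Type*} [DecidableEq α]

theorem card_filter_powersetCard_subset_eq_choose_card_inter (S b : Finset α) (j : ℕ) :
    #{J ∈ S.powersetCard j | J ⊆ b} = (#(b ∩ S)).choose j := by
  rw [← card_powersetCard]
  congr 1
  ext J
  simp only [mem_filter, mem_powersetCard, subset_inter_iff]
  tauto

theorem sum_choose_card_inter_eq_sum_card_filter_superset (B : Finset (Finset α))
    (S : Finset α) (j : ℕ) :
    ∑ b ∈ B, (#(b ∩ S)).choose j = ∑ J ∈ S.powersetCard j, #{b ∈ B | J ⊆ b} := by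
  simp only [← card_filter_powersetCard_subset_eq_choose_card_inter S, card_filter]
  exact sum_comm

theorem sum_range_choose_mul_card_filter_card_inter (B : Finset (Finset α)) (S : Finset α)
    (j : ℕ) :
    ∑ i ∈ range (#S + 1), i.choose j * #{b ∈ B | #(b ∩ S) = i}
      = ∑ b ∈ B, (#(b ∩ S)).choose j := by
  have hmaps : ∀ b ∈ B, #(b ∩ S) ∈ range (#S + 1) := fun b _ =>
    mem_range.2 (Nat.lt_succ_of_le (card_le_card inter_subset_right))
  rw [← sum_fiberwise_of_maps_to hmaps]
  refine sum_congr rfl fun i _ => ?_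
  rw [sum_congr rfl fun b hb => by rw [(mem_filter.1 hb).2], sum_const, smul_eq_mul, mul_comm]

end Counting

theorem IsDesign.card_filter_superset_mul_choose {v t k lam : ℕ} {B : Finset (Finset (Fin v))}
    (hD : IsDesign v t k lam B) {J : Finset (Fin v)} (hJ : #J ≤ t) :
    #{b ∈ B | J ⊆ b} * (k - #J).choose (t - #J) = lam * (v - #J).choose (t - #J) := by
  set A := {T ∈ (univ : Finset (Fin v)).powersetCard t | J ⊆ T}
  have hblocks : ∀ b ∈ B, #{T ∈ A | T ⊆ b} = if J ⊆ b then (k - #J).choose (t - #J) else 0 := by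
    intro b hb
    split_ifs with hJb
    · rw [← hD.1 b hb, ← card_filter_powersetCard_subset J b t hJb hJ]
      congr 1
      ext T
      simp only [A, mem_filter, mem_powersetCard, subset_univ, true_and]
      tauto
    · refine card_eq_zero.2 (filter_eq_empty_iff.2 fun T hT hTb => hJb ?_)
      exact (mem_filter.1 hT).2.trans hTb
  have hsets : ∀ T ∈ A, #{b ∈ B | T ⊆ b} = lam := fun T hT =>
    hD.2 T (mem_powersetCard.1 (mem_filter.1 hT).1).2
  calc #{b ∈ B | J ⊆ b} * (k - #J).choose (t - #J)
      = ∑ b ∈ B, #{T ∈ A | T ⊆ b} := by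
        rw [sum_congr rfl hblocks, ← sum_filter, sum_const, smul_eq_mul]
    _ = ∑ T ∈ A, #{b ∈ B | T ⊆ b} := by
        simp only [card_filter]
        exact sum_comm
    _ = lam * (v - #J).choose (t - #J) := by
        rw [sum_congr rfl hsets, sum_const, smul_eq_mul, mul_comm,
          card_filter_powersetCard_subset J univ t (subset_univ J) hJ, card_univ, Fintype.card_fin]

theorem mendelsohn_equations_general (v t k lam : ℕ) (B : Finset (Finset (Fin v)))
    (hD : IsDesign v t k lam B) (y : Fin v → ZMod 2)
    (w : ℕ) (hw : codeWt y = w) (j : ℕ) (hj : j ≤ t) :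
    (∑ i ∈ Finset.range (w + 1),
        Nat.choose i j *
          (B.filter (fun b => (b ∩ (univ.filter fun p => y p ≠ 0)).card = i)).card)
        * Nat.choose (k - j) (t - j)
      = lam * Nat.choose (v - j) (t - j) * Nat.choose w j := by
  set S : Finset (Fin v) := {p | y p ≠ 0}
  obtain rfl : #S = w := hw
  calc (∑ i ∈ range (#S + 1), i.choose j * #{b ∈ B | #(b ∩ S) = i}) * (k - j).choose (t - j)
      = ∑ J ∈ S.powersetCard j, #{b ∈ B | J ⊆ b} * (k - j).choose (t - j) := by
        rw [sum_range_choose_mul_card_filter_card_inter,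
          sum_choose_card_inter_eq_sum_card_filter_superset, sum_mul]
    _ = ∑ J ∈ S.powersetCard j, lam * (v - j).choose (t - j) := by
        refine sum_congr rfl fun J hJ => ?_
        obtain rfl : #J = j := (mem_powersetCard.1 hJ).2
        exact hD.card_filter_superset_mul_choose hj
    _ = lam * (v - j).choose (t - j) * (#S).choose j := by
        rw [sum_const, card_powersetCard, smul_eq_mul, mul_comm]

theorem mendelsohn_equations (v t k lam : ℕ) (B : Finset (Finset (Fin v)))
    (hD : IsDesign v t k lam B) (y : Fin v → ZMod 2)
    (hy : y ∈ dualSet (designCode v B : Set (Fin v → ZMod 2))) (hy0 : y ≠ 0)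
    (w : ℕ) (hw : codeWt y = w) (j : ℕ) (hj : j ≤ t) :
    (∑ i ∈ Finset.range (w + 1),
        Nat.choose i j *
          (B.filter (fun b => (b ∩ (univ.filter fun p => y p ≠ 0)).card = i)).card)
        * Nat.choose (k - j) (t - j)
      = lam * Nat.choose (v - j) (t - j) * Nat.choose w j :=
  mendelsohn_equations_general v t k lam B hD y w hw j hj
end

section
/- Let D be a self-orthogonal t-(v,k,λ) design with k ≡ 0 (mod 4), and let w with 0 < w < v. If the Mendelsohn system of equations ∑_i C(i,j) n_i = λ_j C(w,j) for j = 0,...,t has no solution in nonnegative integers (n_0, n_2, n_4, ...) with n_i = 0 for odd i, then the dual code C(D)^⊥ contains no vector of weight w. -/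
open Finset

/-!
Let `y` be a dual codeword with support `S`, `#S = w`, and let `n i` be the number of blocks
meeting `S` in exactly `i` points. Since `y` is orthogonal to every block, each block meets `S`
evenly, so `n i = 0` for odd `i`. Counting the pairs `(J, b)` with `J` a `j`-subset of `S`
contained in the block `b` in two ways gives Mendelsohn's equations, so `n` would be a solution.
-/

lemma Finset.sum_comp_eq_sum_range_mul_card_filter {ι : Type*} (s : Finset ι) (f : ι → ℕ)
    (g : ℕ → ℕ) {N : ℕ} (hf : ∀ i ∈ s, f i ≤ N) :
    ∑ i ∈ s, g (f i) = ∑ n ∈ range (N + 1), g n * #{i ∈ s | f i = n} := by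
  rw [← sum_fiberwise_of_maps_to (g := f) (t := range (N + 1))
    (fun i hi => mem_range.2 (Nat.lt_succ_of_le (hf i hi)))]
  refine sum_congr rfl fun n _ => ?_
  rw [sum_congr rfl fun i hi => congrArg g (mem_filter.1 hi).2, sum_const, smul_eq_mul, mul_comm]

lemma Finset.sum_card_filter_subset_powersetCard {α : Type*} [DecidableEq α]
    (B : Finset (Finset α)) (S : Finset α) (j : ℕ) :
    ∑ J ∈ S.powersetCard j, #{b ∈ B | J ⊆ b} = ∑ b ∈ B, (#(b ∩ S)).choose j := by
  refine (sum_card_bipartiteAbove_eq_sum_card_bipartiteBelow (s := S.powersetCard j) (t := B)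
    (· ⊆ ·)).trans ?_
  refine sum_congr rfl fun b _ => ?_
  have hbelow : (S.powersetCard j).bipartiteBelow (· ⊆ ·) b = (b ∩ S).powersetCard j := by
    ext J
    simp only [mem_bipartiteBelow, mem_powersetCard, subset_inter_iff]
    tauto
  rw [hbelow, card_powersetCard]

namespace IsDesign

variable {v t k lam : ℕ} {B : Finset (Finset (Fin v))}

/-- Double counting of the pairs `(T, b)` with `T` a `t`-set and `J ⊆ T ⊆ b ∈ B`. -/
theorem card_filter_subset_mul_choose (hD : IsDesign v t k lam B) {J : Finset (Fin v)}
    (hJ : #J ≤ t) :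
    #{b ∈ B | J ⊆ b} * (k - #J).choose (t - #J) = lam * (v - #J).choose (t - #J) := by
  have hsupersets := card_filter_powersetCard_subset J univ t (subset_univ J) hJ
  rw [card_univ, Fintype.card_fin] at hsupersets
  rw [← hsupersets, mul_comm lam]
  refine (card_mul_eq_card_mul (· ⊆ ·) (fun T hT => ?_) fun b hb => ?_).symm
  · obtain ⟨hT, hJT⟩ := mem_filter.1 hT
    rw [← hD.2 T (mem_powersetCard.1 hT).2]
    congr 1
    ext b
    simp only [mem_bipartiteAbove, mem_filter]
    exact ⟨fun h => ⟨h.1.1, h.2⟩, fun h => ⟨⟨h.1, hJT.trans h.2⟩, h.2⟩⟩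
  · obtain ⟨hb, hJb⟩ := mem_filter.1 hb
    rw [← hD.1 b hb, ← card_filter_powersetCard_subset J b t hJb hJ]
    congr 1
    ext T
    simp only [mem_bipartiteBelow, mem_filter, mem_powersetCard, subset_univ, true_and]
    tauto

theorem mendelsohn_equation (hD : IsDesign v t k lam B) (S : Finset (Fin v)) {j : ℕ}
    (hj : j ≤ t) :
    (∑ i ∈ range (#S + 1), i.choose j * #{b ∈ B | #(b ∩ S) = i}) * (k - j).choose (t - j)
      = lam * (v - j).choose (t - j) * (#S).choose j := by
  rw [← sum_comp_eq_sum_range_mul_card_filter B (fun b => #(b ∩ S)) (·.choose j)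
      fun b _ => card_le_card inter_subset_right,
    ← sum_card_filter_subset_powersetCard, sum_mul, ← card_powersetCard, card_eq_sum_ones,
    mul_sum]
  refine sum_congr rfl fun J hJ => ?_
  obtain rfl := (mem_powersetCard.1 hJ).2
  rw [mul_one, hD.card_filter_subset_mul_choose hj]

end IsDesign

lemma sum_blockVec_mul {v : ℕ} (b : Finset (Fin v)) (y : Fin v → ZMod 2) :
    ∑ i, blockVec b i * y i = #(b.filter (y · ≠ 0)) := by
  have h01 : ∀ a : ZMod 2, a = if a ≠ 0 then 1 else 0 := by decide
  calc ∑ i, blockVec b i * y i = ∑ i ∈ b, y i := by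
        simp only [blockVec, ite_mul, one_mul, zero_mul, sum_ite_mem, univ_inter]
    _ = ∑ i ∈ b, if y i ≠ 0 then 1 else 0 := sum_congr rfl fun i _ => h01 (y i)
    _ = #(b.filter (y · ≠ 0)) := by rw [sum_boole]

lemma even_card_filter_ne_zero_of_mem_dualSet {v : ℕ} {B : Finset (Finset (Fin v))}
    {y : Fin v → ZMod 2} (hy : y ∈ dualSet (designCode v B : Set (Fin v → ZMod 2)))
    {b : Finset (Fin v)} (hb : b ∈ B) : Even #(b.filter (y · ≠ 0)) := by
  have := hy _ (Submodule.subset_span ⟨b, hb, rfl⟩)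
  rw [sum_blockVec_mul, ZMod.natCast_eq_zero_iff] at this
  exact even_iff_two_dvd.2 this

theorem mendelsohn_no_solution_general (v t k lam : ℕ) (B : Finset (Finset (Fin v)))
    (hD : IsSelfOrthogonalDesign v t k lam B)
    (w : ℕ)
    (hno : ¬ ∃ n : ℕ → ℕ, (∀ i, Odd i → n i = 0) ∧
        ∀ j ≤ t, (∑ i ∈ Finset.range (w + 1), Nat.choose i j * n i)
            * Nat.choose (k - j) (t - j)
          = lam * Nat.choose (v - j) (t - j) * Nat.choose w j) :
    ∀ y ∈ dualSet (designCode v B : Set (Fin v → ZMod 2)), codeWt y ≠ w := by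
  rintro y hy rfl
  refine hno ⟨fun i => #{b ∈ B | #(b ∩ univ.filter (y · ≠ 0)) = i}, fun i hi => ?_,
    fun j hj => hD.1.mendelsohn_equation _ hj⟩
  rw [card_eq_zero, filter_eq_empty_iff]
  rintro b hb rfl
  rw [inter_filter, inter_univ] at hi
  exact Nat.not_odd_iff_even.2 (even_card_filter_ne_zero_of_mem_dualSet hy hb) hi

theorem mendelsohn_no_solution (v t k lam : ℕ) (B : Finset (Finset (Fin v)))
    (hD : IsSelfOrthogonalDesign v t k lam B) (hk : k % 4 = 0)
    (w : ℕ) (hw0 : 0 < w) (hwv : w < v)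
    (hno : ¬ ∃ n : ℕ → ℕ, (∀ i, Odd i → n i = 0) ∧
        ∀ j ≤ t, (∑ i ∈ Finset.range (w + 1), Nat.choose i j * n i)
            * Nat.choose (k - j) (t - j)
          = lam * Nat.choose (v - j) (t - j) * Nat.choose w j) :
    ∀ y ∈ dualSet (designCode v B : Set (Fin v → ZMod 2)), codeWt y ≠ w :=
  mendelsohn_no_solution_general v t k lam B hD w hno
end

section
/- Let D be a self-orthogonal t-(v,k,λ) design with k even such that C(D) is self-dual. If the all-one vector 1 lies in C(D̄), where D̄ is the complementary design, then C(D) = C(D̄); otherwise C(D̄) is a subcode of C(D) of index 2. -/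
/-!
Since `C(D)` is self-dual and every block has even size, the all-one vector `1`, being orthogonal
to every block, lies in `C(D)`. Complementing a block adds `1` to its incidence vector, so
`C(D̄) ≤ C(D) ≤ C(D̄) ⊔ ⟨1⟩`: the two codes coincide when `1 ∈ C(D̄)`, and otherwise `C(D̄)` has
index `|𝔽₂| = 2` in `C(D)`.
-/

open Finset

theorem Submodule.relIndex_eq_two_of_le_sup_span_singleton {V : Type*} [AddCommGroup V]
    [Module (ZMod 2) V] {H K : Submodule (ZMod 2) V} {a : V} (haK : a ∈ K) (haH : a ∉ H)
    (hK : K ≤ H ⊔ span (ZMod 2) {a}) :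
    H.toAddSubgroup.relIndex K.toAddSubgroup = 2 := by
  refine AddSubgroup.relIndex_eq_two_iff_exists_notMem_and.2 ⟨a, haK, haH, fun b hb => ?_⟩
  obtain ⟨h, hh, _, hc, rfl⟩ := mem_sup.1 (hK hb)
  obtain ⟨c, rfl⟩ := mem_span_singleton.1 hc
  obtain rfl | rfl := (by decide : ∀ c : ZMod 2, c = 0 ∨ c = 1) c
  · exact Or.inr (by simpa using hh)
  · exact Or.inl (by simpa [add_assoc, ZModModule.add_self] using hh)

theorem sum_blockVec {v : ℕ} (b : Finset (Fin v)) : ∑ i, blockVec b i = b.card := by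
  simp [blockVec]

theorem blockVec_compl_add_blockVec {v : ℕ} (b : Finset (Fin v)) :
    blockVec bᶜ + blockVec b = 1 := by
  funext i
  by_cases hi : i ∈ b <;> simp [blockVec, hi]

theorem mem_dualSet_span {v : ℕ} {S : Set (Fin v → ZMod 2)} {y : Fin v → ZMod 2}
    (h : ∀ x ∈ S, ∑ i, x i * y i = 0) : y ∈ dualSet (Submodule.span (ZMod 2) S : Set _) :=
  fun _ hx =>
    Submodule.span_le (p := LinearMap.ker ((dotProductBilin (ZMod 2) (ZMod 2)).flip y)).2 h hx

theorem one_mem_designCode_of_selfDual {v : ℕ} {B : Finset (Finset (Fin v))}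
    (hB : ∀ b ∈ B, Even b.card)
    (hsd : (designCode v B : Set (Fin v → ZMod 2)) = dualSet (designCode v B)) :
    1 ∈ designCode v B := by
  change 1 ∈ (designCode v B : Set (Fin v → ZMod 2))
  rw [hsd]
  refine mem_dualSet_span ?_
  rintro _ ⟨b, hb, rfl⟩
  simpa [sum_blockVec] using (hB b hb).natCast_zmod_two

theorem designCode_image_compl_le {v : ℕ} {B : Finset (Finset (Fin v))}
    (h1 : 1 ∈ designCode v B) :
    designCode v (B.image compl) ≤ designCode v B := by
  refine Submodule.span_le.2 ?_
  rintro _ ⟨_, hc, rfl⟩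
  obtain ⟨b, hb, rfl⟩ := Finset.mem_image.1 hc
  rw [eq_sub_of_add_eq (blockVec_compl_add_blockVec b)]
  exact sub_mem h1 (Submodule.subset_span ⟨b, hb, rfl⟩)

theorem designCode_le_image_compl_sup_span_one {v : ℕ} (B : Finset (Finset (Fin v))) :
    designCode v B ≤ designCode v (B.image compl) ⊔ Submodule.span (ZMod 2) {1} := by
  refine Submodule.span_le.2 ?_
  rintro _ ⟨b, hb, rfl⟩
  rw [eq_sub_of_add_eq' (blockVec_compl_add_blockVec b)]
  refine sub_mem (Submodule.mem_sup_right (Submodule.mem_span_singleton_self 1))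
    (Submodule.mem_sup_left (Submodule.subset_span ⟨bᶜ, ?_, rfl⟩))
  exact Finset.mem_image_of_mem _ hb

theorem designCode_complementary (v t k lam : ℕ) (B : Finset (Finset (Fin v)))
    (hD : IsSelfOrthogonalDesign v t k lam B) (hk : Even k)
    (hsd : (designCode v B : Set (Fin v → ZMod 2)) = dualSet (designCode v B)) :
    (((fun _ => 1) : Fin v → ZMod 2) ∈ designCode v (B.image fun b => bᶜ) →
      designCode v (B.image fun b => bᶜ) = designCode v B) ∧
    (((fun _ => 1) : Fin v → ZMod 2) ∉ designCode v (B.image fun b => bᶜ) →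
      designCode v (B.image fun b => bᶜ) ≤ designCode v B ∧
      AddSubgroup.relIndex (designCode v (B.image fun b => bᶜ)).toAddSubgroup
        (designCode v B).toAddSubgroup = 2) := by
  have hone : 1 ∈ designCode v B :=
    one_mem_designCode_of_selfDual (fun b hb => hD.1.1 b hb ▸ hk) hsd
  have hle : designCode v (B.image compl) ≤ designCode v B := designCode_image_compl_le hone
  have hsup := designCode_le_image_compl_sup_span_one B
  refine ⟨fun h1 => le_antisymm hle ?_, fun h1 => ⟨hle, ?_⟩⟩
  · exact hsup.trans (sup_le le_rfl ((Submodule.span_singleton_le_iff_mem _ _).2 h1))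
  · exact Submodule.relIndex_eq_two_of_le_sup_span_singleton hone h1 hsup
end

section
/- Let D be a self-orthogonal design with v = 72 points and block size k = 28 forming a 5-(72,28,30888000) design. Then the Mendelsohn equations for a dual vector of weight w = 10 have the unique solution n_0 = 41076475, n_2 = 1096595775, n_4 = 2375199750, n_6 = 834337350, n_8 = 50284575, n_10 = -151525, which involves a negative value; hence C(D)^⊥ contains no vector of weight 10. -/
open Finset

lemma card_supersets {α : Type*} [DecidableEq α] (A T : Finset α) (hT : T ⊆ A) (s : ℕ)
    (hs : T.card ≤ s) :
    ((A.powersetCard s).filter (fun U => T ⊆ U)).card = (A.card - T.card).choose (s - T.card) := by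
  have hrhs : (A.card - T.card).choose (s - T.card) = ((A \ T).powersetCard (s - T.card)).card := by
    rw [card_powersetCard, card_sdiff_of_subset hT]
  rw [hrhs]
  apply Finset.card_bij (fun U _ => U \ T)
  · intro U hU
    simp only [mem_filter, mem_powersetCard] at hU
    obtain ⟨⟨hUA, hUc⟩, hTU⟩ := hU
    rw [mem_powersetCard]
    exact ⟨sdiff_subset_sdiff hUA (le_refl T), by rw [card_sdiff_of_subset hTU, hUc]⟩
  · intro U hU U' hU' h
    simp only [mem_filter, mem_powersetCard] at hU hU'
    have := congrArg (· ∪ T) h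
    simpa [sdiff_union_of_subset hU.2, sdiff_union_of_subset hU'.2] using this
  · intro W hW
    rw [mem_powersetCard] at hW
    have hdisj : Disjoint W T := by
      refine Finset.disjoint_left.2 fun x hx hx' => ?_
      exact (Finset.mem_sdiff.1 (hW.1 hx)).2 hx'
    refine ⟨W ∪ T, ?_, ?_⟩
    · simp only [mem_filter, mem_powersetCard]
      refine ⟨⟨union_subset (hW.1.trans (sdiff_subset)) hT, ?_⟩, subset_union_right⟩
      rw [card_union_of_disjoint hdisj, hW.2]
      omega
    · rw [union_sdiff_right, sdiff_eq_self_of_disjoint hdisj]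

lemma double_count {α β : Type*} (s : Finset α) (t : Finset β) (p : α → β → Prop)
    [∀ a, DecidablePred (p a)] [∀ b, DecidablePred (p · b)] :
    ∑ a ∈ s, (t.filter (p a)).card = ∑ b ∈ t, (s.filter (p · b)).card := by
  simp_rw [Finset.card_filter]
  exact Finset.sum_comm

lemma lambda_j {v t k lam : ℕ} {B : Finset (Finset (Fin v))} (hD : IsDesign v t k lam B)
    (T : Finset (Fin v)) (hj : T.card ≤ t) :
    (B.filter (fun b => T ⊆ b)).card * (k - T.card).choose (t - T.card)
      = lam * (v - T.card).choose (t - T.card) := by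
  classical
  obtain ⟨hcard, hlam⟩ := hD
  set s1 := B.filter (fun b => T ⊆ b) with hs1
  have key : ∑ b ∈ s1, (((univ : Finset (Fin v)).powersetCard t).filter
      (fun U => T ⊆ U ∧ U ⊆ b)).card
      = ∑ U ∈ (univ : Finset (Fin v)).powersetCard t, (s1.filter (fun b => T ⊆ U ∧ U ⊆ b)).card :=
    double_count _ _ _
  have hL : ∀ b ∈ s1, (((univ : Finset (Fin v)).powersetCard t).filter
      (fun U => T ⊆ U ∧ U ⊆ b)).card = (k - T.card).choose (t - T.card) := by
    intro b hb
    rw [hs1, mem_filter] at hb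
    have hbk : b.card = k := hcard b hb.1
    have : ((univ : Finset (Fin v)).powersetCard t).filter (fun U => T ⊆ U ∧ U ⊆ b)
        = (b.powersetCard t).filter (fun U => T ⊆ U) := by
      ext U
      simp only [mem_filter, mem_powersetCard, subset_univ, true_and]
      tauto
    rw [this, card_supersets b T hb.2 t hj, hbk]
  have hR : ∑ U ∈ (univ : Finset (Fin v)).powersetCard t,
      (s1.filter (fun b => T ⊆ U ∧ U ⊆ b)).card
      = lam * (v - T.card).choose (t - T.card) := by
    have h1 : (((univ : Finset (Fin v)).powersetCard t).filter (fun U => T ⊆ U)).card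
        = (v - T.card).choose (t - T.card) := by
      rw [card_supersets (univ : Finset (Fin v)) T (subset_univ T) t hj, card_univ,
        Fintype.card_fin]
    rw [← h1]
    rw [Finset.card_eq_sum_ones (((univ : Finset (Fin v)).powersetCard t).filter
      (fun U => T ⊆ U)), Finset.mul_sum]
    rw [Finset.sum_filter]
    apply Finset.sum_congr rfl
    intro U hU
    rw [mem_powersetCard] at hU
    by_cases hTU : T ⊆ U
    · rw [if_pos hTU, mul_one]
      have : s1.filter (fun b => T ⊆ U ∧ U ⊆ b) = B.filter (fun b => U ⊆ b) := by
        ext b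
        rw [hs1]
        simp only [mem_filter, and_assoc]
        constructor
        · tauto
        · intro ⟨h1, h2⟩; exact ⟨h1, hTU.trans h2, hTU, h2⟩
      rw [this, hlam U hU.2]
    · rw [if_neg hTU]
      rw [Finset.card_eq_zero, Finset.filter_eq_empty_iff]
      intro b _
      simp [hTU]
  rw [Finset.sum_congr rfl hL, Finset.sum_const, smul_eq_mul, hR] at key
  exact key

lemma count_val {B : Finset (Finset (Fin 72))} (hD : IsDesign 72 5 28 30888000 B)
    {j : ℕ} (lamj : ℕ) (hj : j ≤ 5)
    (harith : lamj * (28 - j).choose (5 - j) = 30888000 * (72 - j).choose (5 - j))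
    (hpos : 0 < (28 - j).choose (5 - j))
    (T : Finset (Fin 72)) (hT : T.card = j) :
    (B.filter (fun b => T ⊆ b)).card = lamj := by
  have h := lambda_j hD T (hT ▸ hj)
  rw [hT] at h
  exact Nat.eq_of_mul_eq_mul_right hpos (h.trans harith.symm)

lemma mendel {B : Finset (Finset (Fin 72))} (S : Finset (Fin 72)) (j lamj : ℕ)
    (hlamj : ∀ T : Finset (Fin 72), T.card = j → (B.filter (fun b => T ⊆ b)).card = lamj) :
    ∑ b ∈ B, ((b ∩ S).card).choose j = S.card.choose j * lamj := by
  have h1 : ∀ b : Finset (Fin 72), ((b ∩ S).card).choose j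
      = ((S.powersetCard j).filter (fun T => T ⊆ b)).card := by
    intro b
    rw [← Finset.card_powersetCard]
    congr 1
    ext T
    simp only [mem_powersetCard, mem_filter, subset_inter_iff]
    tauto
  simp_rw [h1]
  rw [double_count B (S.powersetCard j) (fun b T => T ⊆ b)]
  rw [Finset.sum_congr rfl (fun T hT => hlamj T (mem_powersetCard.1 hT).2),
    Finset.sum_const, smul_eq_mul, card_powersetCard]

lemma group_sum {B : Finset (Finset (Fin 72))} (S : Finset (Fin 72)) (hS : S.card = 10)
    (f : ℕ → ℕ) :
    ∑ b ∈ B, f ((b ∩ S).card)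
      = ∑ i ∈ range 11, (B.filter (fun b => (b ∩ S).card = i)).card * f i := by
  rw [← Finset.sum_fiberwise_of_maps_to (g := fun b => (b ∩ S).card) (t := range 11)
    (fun b _ => by
      simp only [mem_range]
      have h : (b ∩ S).card ≤ S.card := card_le_card inter_subset_right
      omega) (fun b => f ((b ∩ S).card))]
  apply sum_congr rfl
  intro i _
  rw [Finset.sum_congr rfl (fun b hb => by rw [(mem_filter.1 hb).2]), Finset.sum_const,
    smul_eq_mul]

theorem design_72_28_weight10 (B : Finset (Finset (Fin 72)))
    (hD : IsSelfOrthogonalDesign 72 5 28 30888000 B) :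
    (∀ n0 n2 n4 n6 n8 n10 : ℤ,
      (∀ j ≤ 5,
        (Nat.choose 0 j : ℤ) * n0 + (Nat.choose 2 j : ℤ) * n2 + (Nat.choose 4 j : ℤ) * n4 +
          (Nat.choose 6 j : ℤ) * n6 + (Nat.choose 8 j : ℤ) * n8 + (Nat.choose 10 j : ℤ) * n10
        = (([4397342400, 1710077600, 650311200, 241544160, 87516000, 30888000] : List ℤ).getD j 0)
            * (Nat.choose 10 j : ℤ)) →
      (n0 = 41076475 ∧ n2 = 1096595775 ∧ n4 = 2375199750 ∧
       n6 = 834337350 ∧ n8 = 50284575 ∧ n10 = -151525)) ∧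
    ∀ y ∈ dualSet (designCode 72 B : Set (Fin 72 → ZMod 2)), codeWt y ≠ 10 := by
  have part1 : ∀ n0 n2 n4 n6 n8 n10 : ℤ,
      (∀ j ≤ 5,
        (Nat.choose 0 j : ℤ) * n0 + (Nat.choose 2 j : ℤ) * n2 + (Nat.choose 4 j : ℤ) * n4 +
          (Nat.choose 6 j : ℤ) * n6 + (Nat.choose 8 j : ℤ) * n8 + (Nat.choose 10 j : ℤ) * n10
        = (([4397342400, 1710077600, 650311200, 241544160, 87516000, 30888000] : List ℤ).getD j 0)
            * (Nat.choose 10 j : ℤ)) →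
      (n0 = 41076475 ∧ n2 = 1096595775 ∧ n4 = 2375199750 ∧
       n6 = 834337350 ∧ n8 = 50284575 ∧ n10 = -151525) := by
    intro n0 n2 n4 n6 n8 n10 h
    have h0 := h 0 (by norm_num)
    have h1 := h 1 (by norm_num)
    have h2 := h 2 (by norm_num)
    have h3 := h 3 (by norm_num)
    have h4 := h 4 (by norm_num)
    have h5 := h 5 (by norm_num)
    norm_num [Nat.choose] at h0 h1 h2 h3 h4 h5
    omega
  refine ⟨part1, ?_⟩
  intro y hy hw
  classical
  set S : Finset (Fin 72) := univ.filter (fun i => y i ≠ 0) with hSdef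
  have hS : S.card = 10 := hw
  -- every block meets S evenly
  have heven : ∀ b ∈ B, (b ∩ S).card % 2 = 0 := by
    intro b hb
    have hxC : blockVec b ∈ designCode 72 B :=
      Submodule.subset_span (Set.mem_image_of_mem _ hb)
    have h0 := hy (blockVec b) hxC
    have hone : ∀ a : ZMod 2, a ≠ 0 → a = 1 := by decide
    have hterm : ∀ i : Fin 72, blockVec b i * y i = if i ∈ b ∩ S then 1 else 0 := by
      intro i
      unfold blockVec
      by_cases hib : i ∈ b
      · by_cases hiS : i ∈ S
        · have hne : y i ≠ 0 := by
            have := hiS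
            rw [hSdef, mem_filter] at this
            exact this.2
          have hy1 : y i = 1 := hone _ hne
          simp [hib, hiS, hy1]
        · have hy0 : y i = 0 := by
            by_contra hne
            exact hiS (by rw [hSdef, mem_filter]; exact ⟨mem_univ i, hne⟩)
          simp [hib, hiS, hy0]
      · simp [hib]
    rw [Finset.sum_congr rfl (fun i _ => hterm i)] at h0
    rw [Finset.sum_ite_mem, univ_inter, Finset.sum_const, nsmul_eq_mul, mul_one] at h0
    have := (ZMod.natCast_eq_zero_iff _ 2).1 h0
    omega
  set m : ℕ → ℕ := fun i => (B.filter (fun b => (b ∩ S).card = i)).card with hm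
  have hodd : ∀ i, i % 2 = 1 → m i = 0 := by
    intro i hi
    rw [hm]
    rw [Finset.card_eq_zero, Finset.filter_eq_empty_iff]
    intro b hb heq
    have := heven b hb
    omega
  have hmend : ∀ j lamj : ℕ, j ≤ 5 →
      lamj * (28 - j).choose (5 - j) = 30888000 * (72 - j).choose (5 - j) →
      0 < (28 - j).choose (5 - j) →
      ∑ i ∈ range 11, m i * i.choose j = Nat.choose 10 j * lamj := by
    intro j lamj hj harith hpos
    have h1 := mendel S j lamj (count_val hD.1 lamj hj harith hpos)
    rw [hS] at h1
    rw [← h1, group_sum S hS (fun n => n.choose j)]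
  have E0 := hmend 0 4397342400 (by norm_num)
    (by norm_num [Nat.choose_eq_descFactorial_div_factorial, Nat.descFactorial, Nat.factorial])
    (Nat.choose_pos (by norm_num))
  have E1 := hmend 1 1710077600 (by norm_num)
    (by norm_num [Nat.choose_eq_descFactorial_div_factorial, Nat.descFactorial, Nat.factorial])
    (Nat.choose_pos (by norm_num))
  have E2 := hmend 2 650311200 (by norm_num)
    (by norm_num [Nat.choose_eq_descFactorial_div_factorial, Nat.descFactorial, Nat.factorial])
    (Nat.choose_pos (by norm_num))
  have E3 := hmend 3 241544160 (by norm_num)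
    (by norm_num [Nat.choose_eq_descFactorial_div_factorial, Nat.descFactorial, Nat.factorial])
    (Nat.choose_pos (by norm_num))
  have E4 := hmend 4 87516000 (by norm_num)
    (by norm_num [Nat.choose_eq_descFactorial_div_factorial, Nat.descFactorial, Nat.factorial])
    (Nat.choose_pos (by norm_num))
  have E5 := hmend 5 30888000 (by norm_num)
    (by norm_num [Nat.choose_eq_descFactorial_div_factorial, Nat.descFactorial, Nat.factorial])
    (Nat.choose_pos (by norm_num))
  have o1 := hodd 1 rfl
  have o3 := hodd 3 rfl
  have o5 := hodd 5 rfl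
  have o7 := hodd 7 rfl
  have o9 := hodd 9 rfl
  simp only [Finset.sum_range_succ, Finset.sum_range_zero, o1, o3, o5, o7, o9] at E0 E1 E2 E3 E4 E5
  norm_num [Nat.choose] at E0 E1 E2 E3 E4 E5
  have key := part1 (m 0) (m 2) (m 4) (m 6) (m 8) (m 10) ?_
  · have : (0 : ℤ) ≤ (m 10 : ℤ) := Int.natCast_nonneg _
    rw [key.2.2.2.2.2] at this
    omega
  · intro j hj
    interval_cases j <;> (norm_num [Nat.choose]; omega)
end

section
/- Let C be a binary singly even self-dual code of length n ≡ 0 (mod 8), let C_0 be its subcode of codewords of weight divisible by 4, and let S = C_0^⊥ \ C be its shadow. Then every vector in S has weight divisible by 4. -/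
open Finset

/-!
For words `c, d` of a self-orthogonal binary code, `wt (c + d) ≡ wt c + wt d (mod 4)`. Hence a
vector `y` of the shadow satisfies `c ⬝ y ≡ wt c / 2 (mod 2)` for every `c ∈ C`, i.e.
`i ^ wt c = (-1) ^ (c ⬝ y)`. Summing `i ^ wt (x + c)` over `c ∈ C` then gives `|C| i ^ wt y` when
`x ∈ y + C` and, by orthogonality of characters on the self-dual code `C`, zero otherwise; summing
over all `x` turns the Gauss sum `∑ₓ i ^ wt x = (1 + i) ^ n` into `(1 + i) ^ n = |C| i ^ wt y`.
When `8 ∣ n` the left side is `16 ^ (n / 8) > 0`, which forces `i ^ wt y = 1`.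
-/

open Complex Matrix

namespace BinaryCode

variable {n : ℕ}

lemma codeWt_eq_sum_val (x : Fin n → ZMod 2) : codeWt x = ∑ i, (x i).val := by
  rw [codeWt, card_filter]
  exact sum_congr rfl fun i _ => (by decide : ∀ a : ZMod 2, (if a ≠ 0 then 1 else 0) = a.val) _

lemma natCast_codeWt (x : Fin n → ZMod 2) : (codeWt x : ZMod 2) = ∑ i, x i := by
  simp [codeWt_eq_sum_val]

lemma codeWt_add_add_two_mul_codeWt_mul (x y : Fin n → ZMod 2) :
    codeWt (x + y) + 2 * codeWt (x * y) = codeWt x + codeWt y := by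
  simp only [codeWt_eq_sum_val, Pi.add_apply, Pi.mul_apply, mul_sum, ← sum_add_distrib]
  exact sum_congr rfl fun i _ =>
    (by decide : ∀ a b : ZMod 2, (a + b).val + 2 * (a * b).val = a.val + b.val) _ _

lemma natCast_codeWt_mul (x y : Fin n → ZMod 2) : (codeWt (x * y) : ZMod 2) = x ⬝ᵥ y :=
  natCast_codeWt _

lemma two_dvd_codeWt_mul_iff (x y : Fin n → ZMod 2) : 2 ∣ codeWt (x * y) ↔ x ⬝ᵥ y = 0 := by
  rw [← ZMod.natCast_eq_zero_iff, natCast_codeWt_mul]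

lemma two_dvd_codeWt_of_dotProduct_self {x : Fin n → ZMod 2} (h : x ⬝ᵥ x = 0) :
    2 ∣ codeWt x := by
  have hxx : x * x = x := funext fun i => (by decide : ∀ a : ZMod 2, a * a = a) (x i)
  rwa [← two_dvd_codeWt_mul_iff, hxx] at h

lemma codeWt_add_mod_four {x y : Fin n → ZMod 2} (h : x ⬝ᵥ y = 0) :
    codeWt (x + y) % 4 = (codeWt x + codeWt y) % 4 := by
  have := codeWt_add_add_two_mul_codeWt_mul x y
  have := (two_dvd_codeWt_mul_iff x y).2 h
  omega

def signChar : AddChar (ZMod 2) ℂ where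
  toFun a := (-1) ^ a.val
  map_zero_eq_one' := rfl
  map_add_eq_mul' a b := by rw [ZMod.val_add, ← neg_one_pow_eq_pow_mod_two, pow_add]

lemma signChar_apply (a : ZMod 2) : signChar a = (-1) ^ a.val := rfl

lemma signChar_natCast (k : ℕ) : signChar k = (-1) ^ k := by
  rw [signChar_apply, ZMod.val_natCast, ← neg_one_pow_eq_pow_mod_two]

lemma signChar_ne_one {a : ZMod 2} (ha : a ≠ 0) : signChar a ≠ 1 := by
  rw [signChar_apply, (by decide : ∀ a : ZMod 2, a ≠ 0 → a.val = 1) a ha]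
  norm_num

lemma signChar_mul_self (a : ZMod 2) : signChar a * signChar a = 1 := by
  rw [← AddChar.map_add_eq_mul, CharTwo.add_self_eq_zero, AddChar.map_zero_eq_one]

lemma I_pow_codeWt_add (x y : Fin n → ZMod 2) :
    I ^ codeWt (x + y) = I ^ codeWt x * I ^ codeWt y * signChar (x ⬝ᵥ y) := by
  have hw := congrArg (I ^ ·) (codeWt_add_add_two_mul_codeWt_mul x y)
  simp only [pow_add, pow_mul, I_sq] at hw
  rw [← hw, ← natCast_codeWt_mul, signChar_natCast, mul_assoc, ← mul_pow]
  simp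

lemma sum_I_pow_codeWt : ∑ x : Fin n → ZMod 2, I ^ codeWt x = (1 + I) ^ n := by
  have h : ∑ a : ZMod 2, I ^ a.val = 1 + I :=
    (Fin.sum_univ_two fun a : Fin 2 => I ^ (a : ℕ)).trans (by simp)
  simp only [codeWt_eq_sum_val, ← prod_pow_eq_pow_sum, ← h, Fintype.sum_pow]

def IsSelfDual (C : Submodule (ZMod 2) (Fin n → ZMod 2)) : Prop :=
  (C : Set (Fin n → ZMod 2)) = dualSet (C : Set (Fin n → ZMod 2))

def shadow (C : Submodule (ZMod 2) (Fin n → ZMod 2)) : Set (Fin n → ZMod 2) :=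
  dualSet {x | x ∈ C ∧ 4 ∣ codeWt x} \ C

section

variable {C : Submodule (ZMod 2) (Fin n → ZMod 2)}

lemma IsSelfDual.dotProduct_eq_zero (hsd : IsSelfDual C) {c d : Fin n → ZMod 2} (hc : c ∈ C)
    (hd : d ∈ C) : c ⬝ᵥ d = 0 := by
  have hd' : d ∈ dualSet (C : Set (Fin n → ZMod 2)) := hsd ▸ hd
  exact hd' c hc

lemma IsSelfDual.two_dvd_codeWt (hsd : IsSelfDual C) {c : Fin n → ZMod 2} (hc : c ∈ C) :
    2 ∣ codeWt c :=
  two_dvd_codeWt_of_dotProduct_self (hsd.dotProduct_eq_zero hc hc)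

lemma dotProduct_eq_zero_iff_four_dvd_of_mem_shadow (hsd : IsSelfDual C) {y c : Fin n → ZMod 2}
    (hy : y ∈ shadow C) (hc : c ∈ C) : c ⬝ᵥ y = 0 ↔ 4 ∣ codeWt c := by
  refine ⟨fun hcy => ?_, fun h4 => hy.1 c ⟨hc, h4⟩⟩
  by_contra h4
  -- then `y ⊥ C`: a word of weight `2 mod 4` differs from `c` by a doubly even word
  apply hy.2
  rw [hsd]
  intro d hd
  by_cases hd4 : 4 ∣ codeWt d
  · exact hy.1 d ⟨hd, hd4⟩
  · have h4cd : 4 ∣ codeWt (c + d) := by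
      have := codeWt_add_mod_four (hsd.dotProduct_eq_zero hc hd)
      have := hsd.two_dvd_codeWt hc
      have := hsd.two_dvd_codeWt hd
      omega
    have := hy.1 (c + d) ⟨C.add_mem hc hd, h4cd⟩
    rwa [← dotProduct, add_dotProduct, hcy, zero_add] at this

lemma I_pow_codeWt_eq_signChar_of_mem_shadow (hsd : IsSelfDual C) {y c : Fin n → ZMod 2}
    (hy : y ∈ shadow C) (hc : c ∈ C) : I ^ codeWt c = signChar (c ⬝ᵥ y) := by
  obtain ⟨k, hk⟩ := hsd.two_dvd_codeWt hc
  have hck : c ⬝ᵥ y = k := by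
    refine (by decide : ∀ a b : ZMod 2, (a = 0 ↔ b = 0) → a = b) _ _ ?_
    rw [dotProduct_eq_zero_iff_four_dvd_of_mem_shadow hsd hy hc, ZMod.natCast_eq_zero_iff, hk]
    omega
  rw [hck, signChar_natCast, hk, pow_mul, I_sq]

lemma I_pow_codeWt_add_of_mem {u c : Fin n → ZMod 2}
    (hu : ∀ c ∈ C, I ^ codeWt c = signChar (c ⬝ᵥ u)) (hc : c ∈ C) :
    I ^ codeWt (c + u) = I ^ codeWt u := by
  rw [I_pow_codeWt_add, hu c hc, mul_right_comm, signChar_mul_self, one_mul]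

variable [DecidablePred (· ∈ C)]

lemma sum_signChar_dotProduct_eq_zero {w : Fin n → ZMod 2}
    (hw : w ∉ dualSet (C : Set (Fin n → ZMod 2))) :
    ∑ c : C, signChar ((c : Fin n → ZMod 2) ⬝ᵥ w) = 0 := by
  obtain ⟨c, hc, hcw⟩ : ∃ c ∈ C, c ⬝ᵥ w ≠ 0 := by simpa [dualSet, dotProduct] using hw
  let ψ : AddChar C ℂ := signChar.compAddMonoidHom
    ((AddMonoidHom.mk' (· ⬝ᵥ w) fun a b => add_dotProduct a b w).comp C.subtype.toAddMonoidHom)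
  refine AddChar.sum_eq_zero_of_ne_one (ψ := ψ) (AddChar.ne_one_iff.2 ⟨⟨c, hc⟩, ?_⟩)
  exact signChar_ne_one hcw

lemma sum_I_pow_codeWt_add (hsd : IsSelfDual C) {u : Fin n → ZMod 2}
    (hu : ∀ c ∈ C, I ^ codeWt c = signChar (c ⬝ᵥ u)) (x : Fin n → ZMod 2) :
    ∑ c : C, I ^ codeWt (x + (c : Fin n → ZMod 2)) =
      if x + u ∈ C then Fintype.card C * I ^ codeWt u else 0 := by
  have hterm (c : C) : I ^ codeWt (x + (c : Fin n → ZMod 2)) =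
      I ^ codeWt x * signChar ((c : Fin n → ZMod 2) ⬝ᵥ (x + u)) := by
    rw [I_pow_codeWt_add, hu c c.2, mul_assoc, ← AddChar.map_add_eq_mul, dotProduct_add,
      dotProduct_comm x, add_comm]
  simp_rw [hterm, ← mul_sum]
  split_ifs with hxu
  · have hx := I_pow_codeWt_add_of_mem hu hxu
    rw [add_assoc, ZModModule.add_self, add_zero] at hx
    simp [hsd.dotProduct_eq_zero _ hxu, hx, mul_comm]
  · rw [sum_signChar_dotProduct_eq_zero (by rwa [← hsd]), mul_zero]

lemma one_add_I_pow_eq_card_mul (hsd : IsSelfDual C) {u : Fin n → ZMod 2}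
    (hu : ∀ c ∈ C, I ^ codeWt c = signChar (c ⬝ᵥ u)) :
    (1 + I) ^ n = Fintype.card C * I ^ codeWt u := by
  have hcount : #{x | x + u ∈ C} = Fintype.card C := by
    rw [← Fintype.card_subtype]
    exact Fintype.card_congr ((Equiv.addRight u).subtypeEquiv fun _ => Iff.rfl)
  have htranslate (c : Fin n → ZMod 2) : ∑ x, I ^ codeWt (x + c) = (1 + I) ^ n :=
    (Equiv.sum_comp (Equiv.addRight c) fun x => I ^ codeWt x).trans sum_I_pow_codeWt
  refine mul_left_cancel₀ (Nat.cast_ne_zero.2 Fintype.card_ne_zero : (Fintype.card C : ℂ) ≠ 0) ?_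
  calc (Fintype.card C : ℂ) * (1 + I) ^ n
      = ∑ c : C, ∑ x, I ^ codeWt (x + (c : Fin n → ZMod 2)) := by
        simp [htranslate]
    _ = ∑ x, ∑ c : C, I ^ codeWt (x + (c : Fin n → ZMod 2)) := sum_comm
    _ = Fintype.card C * (Fintype.card C * I ^ codeWt u) := by
        simp_rw [sum_I_pow_codeWt_add hsd hu]
        rw [sum_ite, sum_const_zero, add_zero, sum_const, hcount, nsmul_eq_mul]

end

lemma four_dvd_of_re_I_pow_pos {k : ℕ} (h : 0 < (I ^ k).re) : 4 ∣ k := by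
  rw [I_pow_eq_pow_mod] at h
  have : k % 4 < 4 := Nat.mod_lt _ (by norm_num)
  interval_cases hk : k % 4 <;> norm_num [pow_succ] at h
  omega

lemma one_add_I_pow_eight : (1 + I) ^ 8 = 16 := by
  have h : (1 + I) ^ 2 = 2 * I := by linear_combination I_sq
  rw [show 8 = 2 * 4 from rfl, pow_mul, h, mul_pow, I_pow_four]
  norm_num

theorem four_dvd_codeWt_of_mem_shadow {C : Submodule (ZMod 2) (Fin n → ZMod 2)} (hn : 8 ∣ n)
    (hsd : IsSelfDual C) {y : Fin n → ZMod 2} (hy : y ∈ shadow C) : 4 ∣ codeWt y := by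
  classical
  obtain ⟨m, rfl⟩ := hn
  have h := one_add_I_pow_eq_card_mul hsd fun c hc =>
    I_pow_codeWt_eq_signChar_of_mem_shadow hsd hy hc
  rw [pow_mul, one_add_I_pow_eight] at h
  have hre : (16 : ℝ) ^ m = Fintype.card C * (I ^ codeWt y).re := by
    have h16 : ((16 : ℂ) ^ m).re = 16 ^ m := by norm_cast
    simpa [h16, ← ofReal_natCast, re_ofReal_mul] using congrArg re h
  have hpos : (0 : ℝ) < Fintype.card C * (I ^ codeWt y).re := hre ▸ by positivity
  exact four_dvd_of_re_I_pow_pos (pos_of_mul_pos_right hpos (Nat.cast_nonneg _))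

end BinaryCode

theorem shadow_weight_div_four_general (n : ℕ) (hn : n % 8 = 0)
    (C : Submodule (ZMod 2) (Fin n → ZMod 2))
    (hsd : (C : Set (Fin n → ZMod 2)) = dualSet (C : Set (Fin n → ZMod 2))) :
    ∀ y ∈ dualSet {x | x ∈ C ∧ 4 ∣ codeWt x} \ (C : Set (Fin n → ZMod 2)),
      4 ∣ codeWt y :=
  fun _ hy => BinaryCode.four_dvd_codeWt_of_mem_shadow (Nat.dvd_of_mod_eq_zero hn) hsd hy

theorem shadow_weight_div_four (n : ℕ) (hn : n % 8 = 0)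
    (C : Submodule (ZMod 2) (Fin n → ZMod 2))
    (hsd : (C : Set (Fin n → ZMod 2)) = dualSet (C : Set (Fin n → ZMod 2)))
    (hse : ∃ x ∈ C, codeWt x % 4 = 2) :
    ∀ y ∈ dualSet {x | x ∈ C ∧ 4 ∣ codeWt x} \ (C : Set (Fin n → ZMod 2)),
      4 ∣ codeWt y :=
  shadow_weight_div_four_general n hn C hsd
end
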